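/- arXiv:1202.3553 — 2 statements merged into one kernel-verified Lean document; each statement's English description precedes it below -/
import Mathlib

section
/- Let r ≥ 2 be an integer and q = exp(iπ/r). For any integer a with 0 ≤ a ≤ r−1, one has {a}! · {r−1−a}! = (√−1)^{r−1} · r, where {k}! = {1}{2}⋯{k} with {j} = q^j − q^{−j} and {0}! = 1. -/
/-!
Since `q^r = -1`, one has `{r - x} = {x}`, so the factors `{a+1}, …, {r-1}` of `{r-1}!` are
`{r-1-a}, …, {1}` and `{a}! {r-1-a}! = {r-1}!`. Writing `{j} = q^{-j} (μ^j - 1)` with `μ = q^2` a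
primitive `r`-th root of unity, `{r-1}! = q^{-r(r-1)/2} ∏_{0<j<r} (μ^j - 1) = (-i)^{r-1} (-1)^{r-1} r`,
by the cyclotomic identity `∏_{0<j<r} (1 - μ^j) = r`.
-/

/-- `q^x = exp(xiπ/r)`. -/
noncomputable def qexp (r : ℕ) (x : ℂ) : ℂ := Complex.exp (x * Real.pi * Complex.I / r)

/-- `{x} = q^x - q^{-x}`. -/
noncomputable def qn (r : ℕ) (x : ℂ) : ℂ := qexp r x - qexp r (-x)

/-- The quantum factorial `{k}! = {1}{2}⋯{k}`, with `{0}! = 1`. -/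
noncomputable def qfact (r : ℕ) (k : ℕ) : ℂ := ∏ j ∈ Finset.range k, qn r ((j : ℂ) + 1)

open Finset Complex

lemma qexp_add (r : ℕ) (x y : ℂ) : qexp r (x + y) = qexp r x * qexp r y := by
  rw [qexp, qexp, qexp, ← exp_add]
  congr 1
  ring

lemma qexp_neg (r : ℕ) (x : ℂ) : qexp r (-x) = (qexp r x)⁻¹ := by
  rw [qexp, qexp, ← exp_neg]
  congr 1
  ring

lemma qexp_sum {ι : Type*} (r : ℕ) (s : Finset ι) (f : ι → ℂ) :
    qexp r (∑ i ∈ s, f i) = ∏ i ∈ s, qexp r (f i) := by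
  simp only [qexp, sum_mul, sum_div, exp_sum]

lemma qexp_natCast_mul (r k : ℕ) (x : ℂ) : qexp r (k * x) = qexp r x ^ k := by
  rw [qexp, qexp, ← exp_nat_mul]
  congr 1
  ring

lemma qexp_natCast_self {r : ℕ} (hr : r ≠ 0) : qexp r r = -1 := by
  have hr' : (r : ℂ) ≠ 0 := Nat.cast_ne_zero.2 hr
  rw [qexp, mul_assoc, mul_div_cancel_left₀ _ hr', exp_pi_mul_I]

lemma isPrimitiveRoot_qexp_two {r : ℕ} (hr : r ≠ 0) : IsPrimitiveRoot (qexp r 2) r := by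
  simpa only [qexp] using isPrimitiveRoot_exp r hr

lemma qn_natCast_sub {r : ℕ} (hr : r ≠ 0) (x : ℂ) : qn r (r - x) = qn r x := by
  rw [qn, qn, sub_eq_add_neg (r : ℂ), neg_add, neg_neg, qexp_add, qexp_add, qexp_neg r r,
    qexp_natCast_self hr]
  ring

lemma qn_natCast (r k : ℕ) : qn r k = qexp r (-k) * (qexp r 2 ^ k - 1) := by
  rw [qn, ← qexp_natCast_mul, mul_sub, ← qexp_add, mul_one]
  ring_nf

lemma sum_range_natCast_add_one (n : ℕ) :
    ∑ j ∈ range n, ((j : ℂ) + 1) = n * (n + 1) / 2 := by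
  induction n with
  | zero => simp
  | succ k ih => rw [sum_range_succ, ih]; push_cast; ring

lemma prod_range_qexp_neg (n : ℕ) :
    ∏ j ∈ range n, qexp (n + 1) (-((j : ℂ) + 1)) = (-I) ^ n := by
  have hn : ((n + 1 : ℕ) : ℂ) ≠ 0 := Nat.cast_ne_zero.2 n.succ_ne_zero
  rw [← qexp_sum, sum_neg_distrib, sum_range_natCast_add_one, qexp, ← exp_neg_pi_div_two_mul_I,
    ← exp_nat_mul]
  congr 1
  field_simp
  push_cast
  ring

lemma qfact_add (r a b : ℕ) :
    qfact r (a + b) = qfact r a * ∏ i ∈ range b, qn r ((a + i : ℕ) + 1) :=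
  prod_range_add _ a b

theorem qfact_mul_qfact_of_add_add_one_eq {r a b : ℕ} (h : a + b + 1 = r) :
    qfact r a * qfact r b = qfact r (a + b) := by
  have hr : r ≠ 0 := by omega
  rw [qfact_add]
  congr 1
  rw [qfact, ← prod_range_reflect]
  refine prod_congr rfl fun i hi => ?_
  have hib : i < b := mem_range.1 hi
  rw [← qn_natCast_sub hr ((a + i : ℕ) + 1)]
  congr 1
  rw [← h]
  push_cast [Nat.cast_sub (by omega : i ≤ b - 1), Nat.cast_sub (by omega : 1 ≤ b)]
  ring

theorem qfact_sub_one {r : ℕ} (hr : r ≠ 0) : qfact r (r - 1) = I ^ (r - 1) * r := by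
  obtain ⟨n, rfl⟩ := Nat.exists_eq_add_one_of_ne_zero hr
  have hfactor (j : ℕ) : qn (n + 1) ((j : ℂ) + 1) =
      qexp (n + 1) (-((j : ℂ) + 1)) * (qexp (n + 1) 2 ^ (j + 1) - 1) := by
    exact_mod_cast qn_natCast (n + 1) (j + 1)
  rw [Nat.add_sub_cancel, qfact, prod_congr rfl fun j _ => hfactor j, prod_mul_distrib,
    prod_range_qexp_neg, neg_eq_neg_one_mul, mul_pow, mul_comm ((-1) ^ n), mul_assoc,
    (isPrimitiveRoot_qexp_two hr).prod_pow_sub_one_eq_order]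
  push_cast
  rfl

/-- For `0 ≤ a ≤ r-1`, one has `{a}!·{r-1-a}! = (√-1)^{r-1}·r`. -/
theorem stmt2 (r : ℕ) (hr : 2 ≤ r) (a : ℕ) (ha : a ≤ r - 1) :
    qfact r a * qfact r (r - 1 - a) = Complex.I ^ (r - 1) * (r : ℂ) := by
  rw [qfact_mul_qfact_of_add_add_one_eq (by omega : a + (r - 1 - a) + 1 = r),
    Nat.add_sub_cancel' ha, qfact_sub_one (by omega)]
end

section
/- Let Λ(x) = −∫₀ˣ log|2 sin t| dt be the Lobachevsky function. Then lim_{r→∞, r odd} (2π/r)·log( Σ_{z=0}^{(r−1)/2} ({z}!·{(r−1)/2−z}!)^{−4} ) = 16·Λ(π/4), where {j} = 2 sin(jπ/r) (taking absolute values) and {k}! = ∏_{j=1}^k {j}. -/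
/-!
Write `f t = log |2 sin t|`. The Lobachevsky function has `Λ' = -f`, and `f` increases on
`(0, π/2]`, so `Λ` is concave on `[0, π/2]`. Comparing with tangent lines, the Riemann sums
`(π/r) log {k}! = (π/r) ∑_{j=1}^k f(jπ/r)` are squeezed between `-Λ(kπ/r)` and
`Λ(π/r) - Λ((k+1)π/r)`. With `n = (r-1)/2`, the midpoint inequality `Λ x + Λ y ≤ 2 Λ((x+y)/2)`
bounds each of the `n + 1` terms of the sum by `exp((8r/π) Λ(nπ/(2r)))`, while the single term
`z = ⌊n/2⌋` is at least `exp((4r/π) (Λ((z+1)π/r) + Λ((n-z+1)π/r) - 2Λ(π/r)))`. By continuity of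
`Λ` both bounds, scaled by `2π/r`, tend to `16 Λ(π/4)`.
-/

open Real Filter

/-- The Lobachevsky function `Λ(x) = -∫₀ˣ log|2 sin t| dt`. -/
noncomputable def lob (x : ℝ) : ℝ := -∫ t in (0 : ℝ)..x, Real.log |2 * Real.sin t|

/-- `{k}! = ∏_{j=1}^k 2 sin(jπ/r)` (real, positive version of the quantum factorial). -/
noncomputable def qfactR (r : ℕ) (k : ℕ) : ℝ :=
  ∏ j ∈ Finset.range k, 2 * Real.sin (((j : ℝ) + 1) * Real.pi / r)

/-- The sum `Σ_{z=0}^{(r-1)/2} ({z}!·{(r-1)/2-z}!)^{-4}`. -/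
noncomputable def growthSum (r : ℕ) : ℝ :=
  ∑ z ∈ Finset.range ((r - 1) / 2 + 1),
    ((qfactR r z * qfactR r ((r - 1) / 2 - z)) ^ 4)⁻¹

open MeasureTheory Set Topology

lemma intervalIntegrable_log_abs_two_mul_sin (a b : ℝ) :
    IntervalIntegrable (fun t => log |2 * sin t|) volume a b := by
  have h : AnalyticOnNhd ℝ (fun t => 2 * sin t) (uIcc a b) := fun _ _ =>
    analyticAt_const.mul analyticAt_sin
  simpa using h.meromorphicOn.intervalIntegrable_log_norm

lemma continuous_lob : Continuous lob :=
  (intervalIntegral.continuous_primitive intervalIntegrable_log_abs_two_mul_sin 0).neg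

lemma hasDerivAt_lob {x : ℝ} (hx : sin x ≠ 0) : HasDerivAt lob (-log |2 * sin x|) x := by
  refine (intervalIntegral.integral_hasDerivAt_right
    (intervalIntegrable_log_abs_two_mul_sin 0 x) ?_ ?_).neg
  · exact (by fun_prop : Measurable fun t => log |2 * sin t|).stronglyMeasurable
      |>.stronglyMeasurableAtFilter
  · exact (continuous_sin.const_mul 2).abs.continuousAt.log (by simpa using hx)

lemma concaveOn_lob : ConcaveOn ℝ (Icc 0 (π / 2)) lob := by
  have hsin : ∀ x ∈ Ioo 0 (π / 2), 0 < sin x := fun x hx =>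
    sin_pos_of_pos_of_lt_pi hx.1 (by linarith [hx.2, pi_pos])
  refine AntitoneOn.concaveOn_of_deriv (convex_Icc _ _) continuous_lob.continuousOn ?_ ?_ <;>
    rw [interior_Icc]
  · exact fun x hx => (hasDerivAt_lob (hsin x hx).ne').differentiableAt.differentiableWithinAt
  · intro x hx y hy hxy
    rw [(hasDerivAt_lob (hsin x hx).ne').deriv, (hasDerivAt_lob (hsin y hy).ne').deriv,
      neg_le_neg_iff]
    refine log_le_log (by simpa using (hsin x hx).ne') ?_
    rw [abs_of_pos (by linarith [hsin x hx]), abs_of_pos (by linarith [hsin y hy])]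
    have := sin_le_sin_of_le_of_le_pi_div_two (by linarith [hx.1, pi_pos]) hy.2.le hxy
    linarith

lemma lob_zero : lob 0 = 0 := by simp [lob]

lemma le_lob_sub_lob {a b : ℝ} (ha : 0 ≤ a) (hab : a ≤ b) (hb : b ≤ π / 2) :
    -(b - a) * log |2 * sin b| ≤ lob b - lob a := by
  rcases hab.eq_or_lt with rfl | hab
  · simp
  have hb₀ : 0 < b := ha.trans_lt hab
  have h := concaveOn_lob.le_slope_of_hasDerivAt ⟨ha, hab.le.trans hb⟩ ⟨hb₀.le, hb⟩ hab
    (hasDerivAt_lob (sin_pos_of_pos_of_lt_pi hb₀ (by linarith [pi_pos])).ne')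
  rw [slope_def_field, le_div_iff₀ (sub_pos.2 hab)] at h
  linarith

lemma lob_sub_lob_le {a b : ℝ} (ha : 0 < a) (hab : a ≤ b) (hb : b ≤ π / 2) :
    lob b - lob a ≤ -(b - a) * log |2 * sin a| := by
  rcases hab.eq_or_lt with rfl | hab
  · simp
  have h := concaveOn_lob.slope_le_of_hasDerivAt ⟨ha.le, hab.le.trans hb⟩ ⟨(ha.trans hab).le, hb⟩
    hab (hasDerivAt_lob (sin_pos_of_pos_of_lt_pi ha (by linarith [pi_pos])).ne')
  rw [slope_def_field, div_le_iff₀ (sub_pos.2 hab)] at h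
  linarith

lemma lob_add_lob_le {x y : ℝ} (hx : x ∈ Icc 0 (π / 2)) (hy : y ∈ Icc 0 (π / 2)) :
    lob x + lob y ≤ 2 * lob ((x + y) / 2) := by
  have h := concaveOn_lob.2 hx hy (by norm_num : (0 : ℝ) ≤ 1 / 2) (by norm_num : (0 : ℝ) ≤ 1 / 2)
    (by norm_num)
  rw [show (1 / 2 : ℝ) • x + (1 / 2 : ℝ) • y = (x + y) / 2 by simp only [smul_eq_mul]; ring] at h
  simp only [smul_eq_mul] at h
  linarith

lemma natCast_mul_pi_div_le_pi_div_two {r m : ℕ} (hr : 0 < r) (h : 2 * m ≤ r) :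
    (m : ℝ) * π / r ≤ π / 2 := by
  rw [div_le_div_iff₀ (by exact_mod_cast hr) two_pos]
  have : (2 * m : ℝ) ≤ r := by exact_mod_cast h
  nlinarith [pi_pos]

lemma sin_natCast_succ_mul_pi_div_pos {r j : ℕ} (hj : j + 1 < r) :
    0 < sin ((j + 1) * π / r) := by
  have hr : (0 : ℝ) < r := by exact_mod_cast (j.succ_pos.trans hj)
  have hjr : (j + 1 : ℝ) < r := by exact_mod_cast hj
  apply sin_pos_of_pos_of_lt_pi (by positivity)
  rw [div_lt_iff₀ hr]
  nlinarith [pi_pos]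

lemma qfactR_pos {r k : ℕ} (hk : k < r) : 0 < qfactR r k :=
  Finset.prod_pos fun j hj =>
    mul_pos two_pos (sin_natCast_succ_mul_pi_div_pos (by have := Finset.mem_range.1 hj; omega))

lemma log_qfactR {r k : ℕ} (hk : k < r) :
    log (qfactR r k) = ∑ j ∈ Finset.range k, log |2 * sin ((j + 1) * π / r)| := by
  simp_rw [log_abs]
  refine log_prod fun j hj => (mul_pos two_pos (sin_natCast_succ_mul_pi_div_pos ?_)).ne'
  have := Finset.mem_range.1 hj
  omega

lemma neg_pi_div_mul_log_qfactR_le_lob {r k : ℕ} (hr : 0 < r) (hk : 2 * k ≤ r) :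
    -(π / r) * log (qfactR r k) ≤ lob (k * π / r) := by
  rw [log_qfactR (by omega), Finset.mul_sum]
  calc ∑ j ∈ Finset.range k, -(π / r) * log |2 * sin ((j + 1) * π / r)|
      ≤ ∑ j ∈ Finset.range k, (lob ((j + 1 : ℕ) * π / r) - lob (j * π / r)) := by
        refine Finset.sum_le_sum fun j hj => ?_
        have hj : 2 * (j + 1) ≤ r := by have := Finset.mem_range.1 hj; omega
        have h := le_lob_sub_lob (a := j * π / r) (b := (j + 1 : ℕ) * π / r) (by positivity)
          (by gcongr; linarith) (natCast_mul_pi_div_le_pi_div_two hr hj)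
        push_cast at h ⊢
        rwa [show ((j : ℝ) + 1) * π / r - j * π / r = π / r by ring] at h
    _ = lob (k * π / r) := by
        rw [Finset.sum_range_sub (fun j : ℕ => lob (j * π / r))]
        simp [lob_zero]

lemma lob_sub_le_neg_pi_div_mul_log_qfactR {r k : ℕ} (hk : 2 * (k + 1) ≤ r) :
    lob ((k + 1 : ℕ) * π / r) - lob (π / r) ≤ -(π / r) * log (qfactR r k) := by
  have hr : 0 < r := by omega
  rw [log_qfactR (by omega), Finset.mul_sum]
  calc lob ((k + 1 : ℕ) * π / r) - lob (π / r)
      = ∑ j ∈ Finset.range k, (lob ((j + 1 + 1 : ℕ) * π / r) - lob ((j + 1 : ℕ) * π / r)) := by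
        rw [Finset.sum_range_sub (fun j : ℕ => lob ((j + 1 : ℕ) * π / r))]
        simp
    _ ≤ ∑ j ∈ Finset.range k, -(π / r) * log |2 * sin ((j + 1) * π / r)| := by
        refine Finset.sum_le_sum fun j hj => ?_
        have hj : 2 * (j + 1 + 1) ≤ r := by have := Finset.mem_range.1 hj; omega
        have h := lob_sub_lob_le (a := (j + 1 : ℕ) * π / r) (b := (j + 1 + 1 : ℕ) * π / r)
          (by positivity) (by gcongr; linarith) (natCast_mul_pi_div_le_pi_div_two hr hj)
        push_cast at h ⊢
        rwa [show ((j : ℝ) + 1 + 1) * π / r - (j + 1) * π / r = π / r by ring] at h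

lemma log_sum_le_log_card_add {ι : Type*} {s : Finset ι} {f : ι → ℝ} {c : ℝ} (hs : s.Nonempty)
    (hf : ∀ i ∈ s, 0 < f i) (hc : ∀ i ∈ s, log (f i) ≤ c) :
    log (∑ i ∈ s, f i) ≤ log s.card + c := by
  have hle : ∑ i ∈ s, f i ≤ s.card * exp c := by
    simpa using Finset.sum_le_sum fun i hi => (log_le_iff_le_exp (hf i hi)).1 (hc i hi)
  calc log (∑ i ∈ s, f i) ≤ log (s.card * exp c) := log_le_log (Finset.sum_pos hf hs) hle
    _ = log s.card + c := by rw [log_mul (by simp [hs.ne_empty]) (exp_pos c).ne', log_exp]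

lemma log_inv_qfactR_mul_pow_four {r z m : ℕ} (hz : z < r) (hm : m < r) :
    log (((qfactR r z * qfactR r m) ^ 4)⁻¹) = -4 * (log (qfactR r z) + log (qfactR r m)) := by
  rw [log_inv, log_pow, log_mul (qfactR_pos hz).ne' (qfactR_pos hm).ne']
  push_cast
  ring

lemma inv_qfactR_mul_pow_four_pos {r z m : ℕ} (hz : z < r) (hm : m < r) :
    0 < ((qfactR r z * qfactR r m) ^ 4)⁻¹ := by
  have := qfactR_pos hz
  have := qfactR_pos hm
  positivity

lemma log_growthSum_term_le {r n z : ℕ} (hn : 2 * n < r) (hz : z ≤ n) :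
    log (((qfactR r z * qfactR r (n - z)) ^ 4)⁻¹) ≤ 8 * r / π * lob (n * (π / 2) / r) := by
  have hr : 0 < r := by omega
  have hz' : z * π / r ∈ Icc 0 (π / 2) :=
    ⟨by positivity, natCast_mul_pi_div_le_pi_div_two hr (by omega)⟩
  have hnz' : (n - z : ℕ) * π / r ∈ Icc 0 (π / 2) :=
    ⟨by positivity, natCast_mul_pi_div_le_pi_div_two hr (by omega)⟩
  have hmid : (z * π / r + (n - z : ℕ) * π / r) / 2 = n * (π / 2) / r := by
    rw [Nat.cast_sub hz]; field_simp; ring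
  have h₁ := neg_pi_div_mul_log_qfactR_le_lob hr (k := z) (by omega)
  have h₂ := neg_pi_div_mul_log_qfactR_le_lob hr (k := n - z) (by omega)
  have h₃ := lob_add_lob_le hz' hnz'
  rw [hmid] at h₃
  rw [log_inv_qfactR_mul_pow_four (by omega) (by omega)]
  calc -4 * (log (qfactR r z) + log (qfactR r (n - z)))
      = 4 * r / π * (-(π / r) * log (qfactR r z) + -(π / r) * log (qfactR r (n - z))) := by
        field_simp; ring
    _ ≤ 4 * r / π * (2 * lob (n * (π / 2) / r)) := by gcongr; linarith
    _ = 8 * r / π * lob (n * (π / 2) / r) := by ring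

lemma le_log_growthSum_term {r z m : ℕ} (hz : 2 * (z + 1) ≤ r) (hm : 2 * (m + 1) ≤ r) :
    4 * r / π * (lob ((z + 1 : ℕ) * π / r) + lob ((m + 1 : ℕ) * π / r) - 2 * lob (π / r)) ≤
      log (((qfactR r z * qfactR r m) ^ 4)⁻¹) := by
  have h₁ := lob_sub_le_neg_pi_div_mul_log_qfactR hz
  have h₂ := lob_sub_le_neg_pi_div_mul_log_qfactR hm
  rw [log_inv_qfactR_mul_pow_four (by omega) (by omega)]
  calc 4 * r / π * (lob ((z + 1 : ℕ) * π / r) + lob ((m + 1 : ℕ) * π / r) - 2 * lob (π / r))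
      ≤ 4 * r / π * (-(π / r) * log (qfactR r z) + -(π / r) * log (qfactR r m)) := by
        gcongr; linarith
    _ = -4 * (log (qfactR r z) + log (qfactR r m)) := by
        have : (r : ℝ) ≠ 0 := by exact_mod_cast (by omega : r ≠ 0)
        field_simp; ring

lemma mul_log_growthSum_le {r : ℕ} (hr : 0 < r) :
    2 * π / r * log (growthSum r) ≤
      2 * π / r * log r + 16 * lob (((r - 1) / 2 : ℕ) * (π / 2) / r) := by
  set n := (r - 1) / 2
  have hlog := log_sum_le_log_card_add (s := Finset.range (n + 1))
    (f := fun z => ((qfactR r z * qfactR r (n - z)) ^ 4)⁻¹) Finset.nonempty_range_add_one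
    (fun z hz => inv_qfactR_mul_pow_four_pos (by grind) (by omega))
    (fun z hz => log_growthSum_term_le (by omega) (Finset.mem_range_succ_iff.1 hz))
  have hcard : log (Finset.range (n + 1)).card ≤ log r := by
    rw [Finset.card_range]
    exact log_le_log (by positivity) (by exact_mod_cast (by omega : n + 1 ≤ r))
  calc 2 * π / r * log (growthSum r)
      ≤ 2 * π / r * (log r + 8 * r / π * lob (n * (π / 2) / r)) := by
        gcongr
        exact hlog.trans (by linarith)
    _ = 2 * π / r * log r + 16 * lob (n * (π / 2) / r) := by
        field_simp; ring

lemma le_mul_log_growthSum {r : ℕ} (hr : 5 ≤ r) :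
    8 * (lob (((r - 1) / 2 / 2 + 1 : ℕ) * π / r)
      + lob (((r - 1) / 2 - (r - 1) / 2 / 2 + 1 : ℕ) * π / r) - 2 * lob (π / r)) ≤
      2 * π / r * log (growthSum r) := by
  set n := (r - 1) / 2
  set z := n / 2
  have hterm : log (((qfactR r z * qfactR r (n - z)) ^ 4)⁻¹) ≤ log (growthSum r) :=
    log_le_log (inv_qfactR_mul_pow_four_pos (by omega) (by omega)) <|
      Finset.single_le_sum (s := Finset.range (n + 1))
        (f := fun y => ((qfactR r y * qfactR r (n - y)) ^ 4)⁻¹)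
        (fun y hy => (inv_qfactR_mul_pow_four_pos (by grind) (by omega)).le)
        (Finset.mem_range.2 (by omega))
  calc 8 * (lob ((z + 1 : ℕ) * π / r) + lob ((n - z + 1 : ℕ) * π / r) - 2 * lob (π / r))
      = 2 * π / r * (4 * r / π * (lob ((z + 1 : ℕ) * π / r) + lob ((n - z + 1 : ℕ) * π / r)
          - 2 * lob (π / r))) := by
        field_simp; ring
    _ ≤ 2 * π / r * log (growthSum r) := by
        gcongr
        exact (le_log_growthSum_term (by omega) (by omega)).trans hterm

lemma tendsto_natCast_div_of_bounded_mul_sub {a : ℕ → ℕ} {d C : ℕ} (hd : 0 < d)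
    (h : ∀ r, d * a r ≤ r + C ∧ r ≤ d * a r + C) :
    Tendsto (fun r : ℕ => (a r : ℝ) / r) atTop (𝓝 (1 / d)) := by
  rw [tendsto_iff_norm_sub_tendsto_zero]
  refine squeeze_zero' (Eventually.of_forall fun _ => norm_nonneg _) ?_
    (tendsto_const_div_atTop_nhds_zero_nat (C : ℝ))
  filter_upwards [eventually_gt_atTop 0] with r hr
  have hd' : (1 : ℝ) ≤ d := by exact_mod_cast hd
  have h₁ : (d * a r : ℝ) ≤ r + C := by exact_mod_cast (h r).1
  have h₂ : (r : ℝ) ≤ d * a r + C := by exact_mod_cast (h r).2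
  have hnum : |(d * a r - r : ℝ)| ≤ C := abs_sub_le_iff.2 ⟨by linarith, by linarith⟩
  calc ‖(a r : ℝ) / r - 1 / d‖ = |(d * a r - r : ℝ)| / (d * r) := by
        rw [Real.norm_eq_abs, show (a r : ℝ) / r - 1 / d = (d * a r - r) / (d * r) by field_simp,
          abs_div, abs_of_pos (by positivity : (0 : ℝ) < d * r)]
    _ ≤ C / (1 * r) := by gcongr
    _ = C / r := by rw [one_mul]

lemma tendsto_lob_natCast_mul_div {a : ℕ → ℕ} {d C : ℕ} (hd : 0 < d)
    (h : ∀ r, d * a r ≤ r + C ∧ r ≤ d * a r + C) (x : ℝ) :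
    Tendsto (fun r : ℕ => lob (a r * x / r)) atTop (𝓝 (lob (x / d))) := by
  have h := ((tendsto_natCast_div_of_bounded_mul_sub hd h).mul_const x)
  rw [one_div_mul_eq_div] at h
  exact (continuous_lob.tendsto _).comp (h.congr fun r => by ring)

lemma tendsto_lob_pi_div_natCast : Tendsto (fun r : ℕ => lob (π / r)) atTop (𝓝 0) := by
  have h := (continuous_lob.tendsto 0).comp (tendsto_const_div_atTop_nhds_zero_nat π)
  rwa [lob_zero] at h

lemma tendsto_two_pi_div_natCast_mul_log :
    Tendsto (fun r : ℕ => 2 * π / r * log r) atTop (𝓝 0) := by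
  have h := (Real.isLittleO_log_id_atTop.tendsto_div_nhds_zero.comp
    tendsto_natCast_atTop_atTop).const_mul (2 * π)
  rw [mul_zero] at h
  exact h.congr fun r => by simp only [Function.comp, id]; ring

/-- `lim_{r→∞, r odd} (2π/r) log Σ_z ({z}!{(r-1)/2-z}!)^{-4} = 16 Λ(π/4)`. -/
theorem stmt11 :
    Tendsto (fun r : ℕ => (2 * Real.pi / r) * Real.log (growthSum r))
      (atTop ⊓ 𝓟 {r : ℕ | Odd r}) (nhds (16 * lob (Real.pi / 4))) := by
  refine Tendsto.mono_left ?_ inf_le_left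
  have hlower : Tendsto (fun r : ℕ => 8 * (lob (((r - 1) / 2 / 2 + 1 : ℕ) * π / r)
      + lob (((r - 1) / 2 - (r - 1) / 2 / 2 + 1 : ℕ) * π / r) - 2 * lob (π / r))) atTop
      (𝓝 (16 * lob (π / 4))) := by
    have h₁ := tendsto_lob_natCast_mul_div (a := fun r => (r - 1) / 2 / 2 + 1) (d := 4) (C := 4)
      four_pos (fun r => by omega) π
    have h₂ := tendsto_lob_natCast_mul_div (a := fun r => (r - 1) / 2 - (r - 1) / 2 / 2 + 1)
      (d := 4) (C := 6) four_pos (fun r => by omega) π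
    convert ((h₁.add h₂).sub (tendsto_lob_pi_div_natCast.const_mul 2)).const_mul 8 using 2
    push_cast
    ring
  have hupper : Tendsto
      (fun r : ℕ => 2 * π / r * log r + 16 * lob (((r - 1) / 2 : ℕ) * (π / 2) / r)) atTop
      (𝓝 (16 * lob (π / 4))) := by
    have h := tendsto_lob_natCast_mul_div (a := fun r => (r - 1) / 2) (d := 2) (C := 2) two_pos
      (fun r => by omega) (π / 2)
    convert tendsto_two_pi_div_natCast_mul_log.add (h.const_mul 16) using 2
    norm_num [div_div]
  exact tendsto_of_tendsto_of_tendsto_of_le_of_le' hlower hupper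
    (eventually_atTop.2 ⟨5, fun r hr => le_mul_log_growthSum hr⟩)
    (eventually_atTop.2 ⟨1, fun r hr => mul_log_growthSum_le hr⟩)
end
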